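/- arXiv:2209.01874 — 4 statements merged into one kernel-verified Lean document; each statement's English description precedes it below -/
import Mathlib

section
/- Fix a finite MDP, baseline policy π_base, and for each stationary policy π and adherence level θ ∈ [0,1] let π_eff(π,θ) = θ·π + (1-θ)·π_base (state-wise convex combination of action distributions). Let R be the discounted return functional and let R*(θ) = max over stationary policies π of R(π_eff(π,θ)). Then θ ↦ R*(θ) is non-decreasing on [0,1]. -/
open scoped BigOperators
open Matrix

/-- Markov matrix induced by a stationary policy. -/
noncomputable def mdpM {S A : Type*} [Fintype S] [Fintype A]
    (P : S → A → S → ℝ) (π : S → A → ℝ) : Matrix S S ℝ :=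
  fun s s' => ∑ a, π s a * P s a s'

/-- Expected instantaneous reward under a stationary policy. -/
noncomputable def mdpr {S A : Type*} [Fintype S] [Fintype A]
    (P : S → A → S → ℝ) (r : S → A → S → ℝ) (π : S → A → ℝ) : S → ℝ :=
  fun s => ∑ a, π s a * ∑ s', P s a s' * r s a s'

/-- Expected discounted return of a stationary policy from initial distribution `p0`. -/
noncomputable def Ret {S A : Type*} [Fintype S] [Fintype A] [DecidableEq S]
    (lam : ℝ) (P : S → A → S → ℝ) (r : S → A → S → ℝ) (p0 : S → ℝ)
    (π : S → A → ℝ) : ℝ :=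
  ∑' t : ℕ, lam ^ t * ∑ s, p0 s * ((mdpM P π ^ t) *ᵥ (mdpr P r π)) s

section aux
variable {S A : Type*} [Fintype S] [Fintype A] [DecidableEq S]

lemma mdpr_bound (P : S → A → S → ℝ) (hP : ∀ s a, P s a ∈ stdSimplex ℝ S)
    (r : S → A → S → ℝ) (μ : S → A → ℝ) (hμ : ∀ s, μ s ∈ stdSimplex ℝ A) (s : S) :
    |mdpr P r μ s| ≤ ∑ s, ∑ a, ∑ s', |r s a s'| := by
  set B := ∑ s, ∑ a, ∑ s', |r s a s'| with hB
  have hinner : ∀ a, |∑ s', P s a s' * r s a s'| ≤ B := by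
    intro a
    calc |∑ s', P s a s' * r s a s'| ≤ ∑ s', |P s a s' * r s a s'| :=
          Finset.abs_sum_le_sum_abs _ _
      _ ≤ ∑ s', |r s a s'| := by
          apply Finset.sum_le_sum
          intro s' _
          rw [abs_mul, abs_of_nonneg ((hP s a).1 s')]
          have hle1 : P s a s' ≤ 1 := by
            have := Finset.single_le_sum (f := fun x => P s a x)
              (fun i _ => (hP s a).1 i) (Finset.mem_univ s')
            rw [(hP s a).2] at this
            exact this
          nlinarith [(hP s a).1 s', abs_nonneg (r s a s')]
      _ ≤ ∑ a, ∑ s', |r s a s'| := by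
          apply Finset.single_le_sum (f := fun a => ∑ s', |r s a s'|)
          · intro i _; positivity
          · exact Finset.mem_univ a
      _ ≤ B := by
          apply Finset.single_le_sum (f := fun s => ∑ a, ∑ s', |r s a s'|)
          · intro i _; positivity
          · exact Finset.mem_univ s
  calc |mdpr P r μ s| ≤ ∑ a, |μ s a * ∑ s', P s a s' * r s a s'| :=
        Finset.abs_sum_le_sum_abs _ _
    _ ≤ ∑ a, μ s a * B := by
        apply Finset.sum_le_sum
        intro a _
        rw [abs_mul, abs_of_nonneg ((hμ s).1 a)]
        exact mul_le_mul_of_nonneg_left (hinner a) ((hμ s).1 a)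
    _ = B := by rw [← Finset.sum_mul, (hμ s).2, one_mul]

lemma mdpM_row (P : S → A → S → ℝ) (hP : ∀ s a, P s a ∈ stdSimplex ℝ S)
    (μ : S → A → ℝ) (hμ : ∀ s, μ s ∈ stdSimplex ℝ A) (s : S) :
    (∀ s', 0 ≤ mdpM P μ s s') ∧ ∑ s', mdpM P μ s s' = 1 := by
  constructor
  · intro s'
    apply Finset.sum_nonneg
    intro a _
    exact mul_nonneg ((hμ s).1 a) ((hP s a).1 s')
  · show ∑ s', ∑ a, μ s a * P s a s' = 1
    rw [Finset.sum_comm]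
    calc ∑ a, ∑ s', μ s a * P s a s' = ∑ a, μ s a * ∑ s', P s a s' := by
          simp [Finset.mul_sum]
      _ = 1 := by
          simp only [(fun a => (hP s a).2)]
          simpa using (hμ s).2

lemma pow_mulVec_bound (M : Matrix S S ℝ)
    (hM : ∀ s, (∀ s', 0 ≤ M s s') ∧ ∑ s', M s s' = 1)
    (v : S → ℝ) (B : ℝ) (hv : ∀ s, |v s| ≤ B) (t : ℕ) (s : S) :
    |((M ^ t) *ᵥ v) s| ≤ B := by
  induction t generalizing s with
  | zero => simpa using hv s
  | succ n ih =>
    have : (M ^ (n+1)) *ᵥ v = M *ᵥ ((M ^ n) *ᵥ v) := by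
      rw [pow_succ', Matrix.mulVec_mulVec]
    rw [this]
    calc |(M *ᵥ ((M ^ n) *ᵥ v)) s| ≤ ∑ s', |M s s' * ((M ^ n) *ᵥ v) s'| :=
          Finset.abs_sum_le_sum_abs _ _
      _ ≤ ∑ s', M s s' * B := by
          apply Finset.sum_le_sum
          intro s' _
          rw [abs_mul, abs_of_nonneg ((hM s).1 s')]
          exact mul_le_mul_of_nonneg_left (ih s') ((hM s).1 s')
      _ = B := by rw [← Finset.sum_mul, (hM s).2, one_mul]

lemma ret_abs_bound (lam : ℝ) (hlam : lam ∈ Set.Ico (0:ℝ) 1)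
    (P : S → A → S → ℝ) (hP : ∀ s a, P s a ∈ stdSimplex ℝ S)
    (r : S → A → S → ℝ) (p0 : S → ℝ) (hp0 : p0 ∈ stdSimplex ℝ S)
    (μ : S → A → ℝ) (hμ : ∀ s, μ s ∈ stdSimplex ℝ A) :
    Ret lam P r p0 μ ≤ (∑ s, ∑ a, ∑ s', |r s a s'|) * (1 - lam)⁻¹ := by
  set B := ∑ s, ∑ a, ∑ s', |r s a s'| with hBdef
  have hB0 : 0 ≤ B := by positivity
  set f : ℕ → ℝ := fun t => lam ^ t * ∑ s, p0 s * ((mdpM P μ ^ t) *ᵥ (mdpr P r μ)) s with hf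
  have hterm : ∀ t, |f t| ≤ B * lam ^ t := by
    intro t
    have h1 : |∑ s, p0 s * ((mdpM P μ ^ t) *ᵥ (mdpr P r μ)) s| ≤ B := by
      calc |∑ s, p0 s * ((mdpM P μ ^ t) *ᵥ (mdpr P r μ)) s|
          ≤ ∑ s, |p0 s * ((mdpM P μ ^ t) *ᵥ (mdpr P r μ)) s| :=
            Finset.abs_sum_le_sum_abs _ _
        _ ≤ ∑ s, p0 s * B := by
            apply Finset.sum_le_sum
            intro s _
            rw [abs_mul, abs_of_nonneg (hp0.1 s)]
            exact mul_le_mul_of_nonneg_left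
              (pow_mulVec_bound _ (mdpM_row P hP μ hμ) _ B (mdpr_bound P hP r μ hμ) t s)
              (hp0.1 s)
        _ = B := by rw [← Finset.sum_mul, hp0.2, one_mul]
    calc |f t| = lam ^ t * |∑ s, p0 s * ((mdpM P μ ^ t) *ᵥ (mdpr P r μ)) s| := by
          rw [hf]; simp [abs_mul, abs_of_nonneg (pow_nonneg hlam.1 t)]
      _ ≤ lam ^ t * B := mul_le_mul_of_nonneg_left h1 (pow_nonneg hlam.1 t)
      _ = B * lam ^ t := mul_comm _ _
  have hgeo : Summable (fun t : ℕ => B * lam ^ t) :=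
    (summable_geometric_of_lt_one hlam.1 hlam.2).mul_left B
  have hsumabs : Summable (fun t => |f t|) :=
    Summable.of_nonneg_of_le (fun t => abs_nonneg _) hterm hgeo
  have hsum : Summable f := hsumabs.of_abs
  have : Ret lam P r p0 μ = ∑' t, f t := rfl
  rw [this]
  calc ∑' t, f t ≤ ∑' t, B * lam ^ t := by
        apply Summable.tsum_le_tsum _ hsum hgeo
        intro t
        exact le_trans (le_abs_self _) (hterm t)
    _ = B * (1 - lam)⁻¹ := by
        rw [tsum_mul_left, tsum_geometric_of_lt_one hlam.1 hlam.2]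

end aux

lemma mix_policy {A : Type*} [Fintype A] (θ : ℝ) (hθ : θ ∈ Set.Icc (0:ℝ) 1)
    {S : Type*} (π πb : S → A → ℝ)
    (hπ : ∀ s, π s ∈ stdSimplex ℝ A) (hπb : ∀ s, πb s ∈ stdSimplex ℝ A) (s : S) :
    (fun a => θ * π s a + (1 - θ) * πb s a) ∈ stdSimplex ℝ A := by
  constructor
  · intro a
    have h1 : 0 ≤ 1 - θ := by linarith [hθ.2]
    exact add_nonneg (mul_nonneg hθ.1 ((hπ s).1 a)) (mul_nonneg h1 ((hπb s).1 a))
  · simp [Finset.sum_add_distrib, ← Finset.mul_sum, (hπ s).2, (hπb s).2]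


/-- The optimal effective return `θ ↦ R*(θ)` of the adherence-aware MDP is
non-decreasing on `[0,1]`. -/
theorem stmt4 {S A : Type*} [Fintype S] [Fintype A] [Nonempty S] [Nonempty A]
    [DecidableEq S]
    (lam : ℝ) (hlam : lam ∈ Set.Ico (0:ℝ) 1)
    (P : S → A → S → ℝ) (hP : ∀ s a, P s a ∈ stdSimplex ℝ S)
    (r : S → A → S → ℝ)
    (p0 : S → ℝ) (hp0 : p0 ∈ stdSimplex ℝ S)
    (πb : S → A → ℝ) (hπb : ∀ s, πb s ∈ stdSimplex ℝ A)
    (Rstar : ℝ → ℝ)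
    (hRstar : ∀ θ, Rstar θ = sSup {x : ℝ | ∃ π : S → A → ℝ,
      (∀ s, π s ∈ stdSimplex ℝ A) ∧
      x = Ret lam P r p0 (fun s a => θ * π s a + (1 - θ) * πb s a)}) :
    ∀ θ₁ ∈ Set.Icc (0:ℝ) 1, ∀ θ₂ ∈ Set.Icc (0:ℝ) 1, θ₁ ≤ θ₂ →
      Rstar θ₁ ≤ Rstar θ₂ := by
  intro θ₁ hθ₁ θ₂ hθ₂ hle
  rw [hRstar θ₁, hRstar θ₂]
  have hne : {x : ℝ | ∃ π : S → A → ℝ, (∀ s, π s ∈ stdSimplex ℝ A) ∧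
      x = Ret lam P r p0 (fun s a => θ₁ * π s a + (1 - θ₁) * πb s a)}.Nonempty :=
    ⟨_, πb, hπb, rfl⟩
  have hbdd : BddAbove {x : ℝ | ∃ π : S → A → ℝ, (∀ s, π s ∈ stdSimplex ℝ A) ∧
      x = Ret lam P r p0 (fun s a => θ₂ * π s a + (1 - θ₂) * πb s a)} := by
    refine ⟨(∑ s, ∑ a, ∑ s', |r s a s'|) * (1 - lam)⁻¹, ?_⟩
    rintro x ⟨π, hπ, rfl⟩
    exact ret_abs_bound lam hlam P hP r p0 hp0 _ (mix_policy θ₂ hθ₂ π πb hπ hπb)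
  have hsub : {x : ℝ | ∃ π : S → A → ℝ, (∀ s, π s ∈ stdSimplex ℝ A) ∧
      x = Ret lam P r p0 (fun s a => θ₁ * π s a + (1 - θ₁) * πb s a)} ⊆
      {x : ℝ | ∃ π : S → A → ℝ, (∀ s, π s ∈ stdSimplex ℝ A) ∧
      x = Ret lam P r p0 (fun s a => θ₂ * π s a + (1 - θ₂) * πb s a)} := by
    rintro x ⟨π, hπ, rfl⟩
    rcases eq_or_lt_of_le hθ₂.1 with h0 | h0
    · have h1 : θ₁ = 0 := le_antisymm (h0 ▸ hle) hθ₁.1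
      exact ⟨π, hπ, by rw [h1, ← h0]⟩
    · have hr : θ₁ / θ₂ ∈ Set.Icc (0:ℝ) 1 :=
        ⟨div_nonneg hθ₁.1 h0.le, (div_le_one h0).2 hle⟩
      refine ⟨fun s a => (θ₁ / θ₂) * π s a + (1 - θ₁ / θ₂) * πb s a,
        fun s => mix_policy (θ₁ / θ₂) hr π πb hπ hπb s, ?_⟩
      congr 1
      funext s a
      field_simp
      ring
  exact csSup_le_csSup hbdd hne hsub
end

section
/- Suppose in the adherence-aware MDP setting that the value function of the baseline policy and of the nominal optimal policy coincide at a state s̄, i.e., v^{π_base}(s̄) = v^{π*}(s̄) where v^{π*} is the optimal nominal value function. Then for every adherence level θ ∈ [0,1], the optimal adherence-aware value function v∞_θ satisfies v∞_θ(s̄) = v^{π_base}(s̄), and moreover the baseline action distribution π_base(s̄) attains the maximum in the adherence-aware Bellman equation at s̄. -/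
open scoped BigOperators

/-- One-step policy evaluation operator `T^π_s(v)`. -/
noncomputable def Tpol {S A : Type*} [Fintype S] [Fintype A]
    (lam : ℝ) (P : S → A → S → ℝ) (r : S → A → S → ℝ)
    (π : S → A → ℝ) (v : S → ℝ) (s : S) : ℝ :=
  ∑ a, π s a * ∑ s', P s a s' * (r s a s' + lam * v s')

lemma simplex_weighted_le {A : Type*} [Fintype A] (p : A → ℝ)
    (hp : p ∈ stdSimplex ℝ A) (f : A → ℝ) (M : ℝ) (hf : ∀ a, f a ≤ M) :
    ∑ a, p a * f a ≤ M := by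
  calc ∑ a, p a * f a ≤ ∑ a, p a * M :=
        Finset.sum_le_sum fun a _ => mul_le_mul_of_nonneg_left (hf a) (hp.1 a)
    _ = M := by rw [← Finset.sum_mul, hp.2, one_mul]

lemma Q_diff_le {S A : Type*} [Fintype S] [Fintype A] (lam : ℝ) (hl : 0 ≤ lam)
    (P : S → A → S → ℝ) (hP : ∀ s a, P s a ∈ stdSimplex ℝ S)
    (r : S → A → S → ℝ) (p : A → ℝ) (hp : p ∈ stdSimplex ℝ A)
    (v w : S → ℝ) (M : ℝ) (hM : ∀ s, v s - w s ≤ M) (s : S) :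
    (∑ a, p a * ∑ s', P s a s' * (r s a s' + lam * v s'))
      - (∑ a, p a * ∑ s', P s a s' * (r s a s' + lam * w s')) ≤ lam * M := by
  rw [← Finset.sum_sub_distrib]
  have key : ∀ a : A, p a * ∑ s', P s a s' * (r s a s' + lam * v s')
      - p a * ∑ s', P s a s' * (r s a s' + lam * w s')
      ≤ p a * (lam * M) := by
    intro a
    rw [← mul_sub]
    refine mul_le_mul_of_nonneg_left ?_ (hp.1 a)
    have hrw : (∑ s', P s a s' * (r s a s' + lam * v s'))
        - ∑ s', P s a s' * (r s a s' + lam * w s')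
        = lam * ∑ s', P s a s' * (v s' - w s') := by
      rw [← Finset.sum_sub_distrib, Finset.mul_sum]
      congr 1; ext s'; ring
    rw [hrw]
    exact mul_le_mul_of_nonneg_left
      (simplex_weighted_le _ (hP s a) _ M hM) hl
  calc _ ≤ ∑ a, p a * (lam * M) := Finset.sum_le_sum fun a _ => key a
    _ = lam * M := by rw [← Finset.sum_mul, hp.2, one_mul]

lemma Tpol_diff_le {S A : Type*} [Fintype S] [Fintype A] (lam : ℝ) (hl : 0 ≤ lam)
    (P : S → A → S → ℝ) (hP : ∀ s a, P s a ∈ stdSimplex ℝ S)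
    (r : S → A → S → ℝ) (π : S → A → ℝ) (hπ : ∀ s, π s ∈ stdSimplex ℝ A)
    (v w : S → ℝ) (M : ℝ) (hM : ∀ s, v s - w s ≤ M) (s : S) :
    Tpol lam P r π v s - Tpol lam P r π w s ≤ lam * M :=
  Q_diff_le lam hl P hP r (π s) (hπ s) v w M hM s

/-- If the baseline value and the optimal nominal value coincide at a state `s̄`, then
the optimal adherence-aware value at `s̄` equals the baseline value for every adherence
level `θ`, and the baseline action distribution attains the maximum of the
adherence-aware Bellman equation at `s̄`. -/
theorem stmt12 {S A : Type*} [Fintype S] [Fintype A] [Nonempty S] [Nonempty A]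
    (lam θ : ℝ) (hlam : lam ∈ Set.Ico (0:ℝ) 1) (hθ : θ ∈ Set.Icc (0:ℝ) 1)
    (P : S → A → S → ℝ) (hP : ∀ s a, P s a ∈ stdSimplex ℝ S)
    (r : S → A → S → ℝ)
    (πb : S → A → ℝ) (hπb : ∀ s, πb s ∈ stdSimplex ℝ A)
    (vb : S → ℝ) (hvb : ∀ s, vb s = Tpol lam P r πb vb s)
    (vstar : S → ℝ)
    (hvstar : ∀ s, vstar s = sSup {x : ℝ | ∃ p ∈ stdSimplex ℝ A,
      x = ∑ a, p a * ∑ s', P s a s' * (r s a s' + lam * vstar s')})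
    (vθ : S → ℝ)
    (hvθ : ∀ s, vθ s = sSup {x : ℝ | ∃ p ∈ stdSimplex ℝ A,
      x = θ * ∑ a, p a * ∑ s', P s a s' * (r s a s' + lam * vθ s')
        + (1 - θ) * Tpol lam P r πb vθ s})
    (sbar : S) (heq : vb sbar = vstar sbar) :
    vθ sbar = vb sbar ∧
    θ * Tpol lam P r πb vθ sbar + (1 - θ) * Tpol lam P r πb vθ sbar = vθ sbar := by
  obtain ⟨hl0, hl1⟩ := hlam
  obtain ⟨hθ0, hθ1⟩ := hθ
  -- boundedness of the Bellman sets
  have bddθ : ∀ s : S, BddAbove {x : ℝ | ∃ p ∈ stdSimplex ℝ A,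
      x = θ * ∑ a, p a * ∑ s', P s a s' * (r s a s' + lam * vθ s')
        + (1 - θ) * Tpol lam P r πb vθ s} := by
    intro s
    obtain ⟨a0, ha0⟩ := Finite.exists_max
      (fun a : A => ∑ s', P s a s' * (r s a s' + lam * vθ s'))
    refine ⟨θ * (∑ s', P s a0 s' * (r s a0 s' + lam * vθ s'))
      + (1 - θ) * Tpol lam P r πb vθ s, ?_⟩
    rintro x ⟨p, hp, rfl⟩
    have := simplex_weighted_le p hp
      (fun a => ∑ s', P s a s' * (r s a s' + lam * vθ s'))
      (∑ s', P s a0 s' * (r s a0 s' + lam * vθ s')) ha0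
    have := mul_le_mul_of_nonneg_left this hθ0
    linarith
  have bddstar : ∀ s : S, BddAbove {x : ℝ | ∃ p ∈ stdSimplex ℝ A,
      x = ∑ a, p a * ∑ s', P s a s' * (r s a s' + lam * vstar s')} := by
    intro s
    obtain ⟨a0, ha0⟩ := Finite.exists_max
      (fun a : A => ∑ s', P s a s' * (r s a s' + lam * vstar s'))
    refine ⟨∑ s', P s a0 s' * (r s a0 s' + lam * vstar s'), ?_⟩
    rintro x ⟨p, hp, rfl⟩
    exact simplex_weighted_le p hp _ _ ha0
  -- vθ dominates its own policy-evaluation operator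
  have hTθ : ∀ s : S, Tpol lam P r πb vθ s ≤ vθ s := by
    intro s
    rw [hvθ s]
    refine le_csSup (bddθ s) ⟨πb s, hπb s, ?_⟩
    show Tpol lam P r πb vθ s
      = θ * Tpol lam P r πb vθ s + (1 - θ) * Tpol lam P r πb vθ s
    ring
  -- Step 1 : vb ≤ vθ pointwise
  have hble : ∀ s, vb s ≤ vθ s := by
    obtain ⟨s0, hs0⟩ := Finite.exists_max (fun s : S => vb s - vθ s)
    have hstep : ∀ s : S, vb s - vθ s ≤ lam * (vb s0 - vθ s0) := by
      intro s
      have h1 : Tpol lam P r πb vb s - Tpol lam P r πb vθ s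
          ≤ lam * (vb s0 - vθ s0) :=
        Tpol_diff_le lam hl0 P hP r πb hπb vb vθ _ hs0 s
      have h2 := hTθ s
      rw [hvb s]
      linarith
    have hM : vb s0 - vθ s0 ≤ 0 := by
      have := hstep s0
      nlinarith
    intro s
    have := hs0 s
    linarith
  -- Step 2 : vθ ≤ vstar pointwise
  have hsle : ∀ s, vθ s ≤ vstar s := by
    obtain ⟨s0, hs0⟩ := Finite.exists_max (fun s : S => vθ s - vstar s)
    set M := vθ s0 - vstar s0 with hMdef
    have hstep : ∀ s : S, vθ s - vstar s ≤ lam * M := by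
      intro s
      have hQ : ∀ p ∈ stdSimplex ℝ A,
          (∑ a, p a * ∑ s', P s a s' * (r s a s' + lam * vθ s'))
            ≤ vstar s + lam * M := by
        intro p hp
        have hd := Q_diff_le lam hl0 P hP r p hp vθ vstar M hs0 s
        have hmem : (∑ a, p a * ∑ s', P s a s' * (r s a s' + lam * vstar s'))
            ≤ vstar s := by
          rw [hvstar s]
          exact le_csSup (bddstar s) ⟨p, hp, rfl⟩
        linarith
      have : vθ s ≤ vstar s + lam * M := by
        rw [hvθ s]
        refine csSup_le ⟨_, ⟨πb s, hπb s, rfl⟩⟩ ?_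
        rintro x ⟨p, hp, rfl⟩
        have h1 := hQ p hp
        have h2 : Tpol lam P r πb vθ s ≤ vstar s + lam * M := hQ (πb s) (hπb s)
        nlinarith
      linarith
    have hM : M ≤ 0 := by
      have := hstep s0
      rw [← hMdef] at this
      nlinarith
    intro s
    have := hs0 s
    linarith
  -- combine at sbar
  have hfix : vθ sbar = vb sbar := by
    have h1 := hble sbar
    have h2 := hsle sbar
    linarith [heq ▸ h2]
  refine ⟨hfix, ?_⟩
  have h1 : Tpol lam P r πb vθ sbar ≤ vθ sbar := hTθ sbar
  have h2 : Tpol lam P r πb vb sbar - Tpol lam P r πb vθ sbar ≤ lam * 0 :=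
    Tpol_diff_le lam hl0 P hP r πb hπb vb vθ 0 (fun s => by linarith [hble s]) sbar
  have h3 : vθ sbar = Tpol lam P r πb vθ sbar := by
    have := hvb sbar
    rw [hfix]
    linarith
  linarith [h3]
end

section
/- Consider the adherence-aware MDP with effective policy π_eff(π,θ) = θπ + (1-θ)π_base, and define the robust problem V_rob = max over stationary policies π of min over θ' ∈ [θ_lo, θ_hi] of R(π_eff(π,θ')). Then V_rob = max over stationary π of R(π_eff(π, θ_lo)); that is, the worst case over the uncertainty interval is always attained at the lowest adherence level θ_lo, and the pair (π*_alg(θ_lo), θ_lo) is a saddle point. -/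
open scoped BigOperators
open Matrix

/-!
For a fixed adherence level `θ`, the adherence-aware problem is an ordinary discounted MDP whose
action values are `θ Q(s, a) + (1 - θ) (T^{πb} v)(s)`. It therefore has an optimal deterministic
recommendation `d` (a maximiser of the total value among the finitely many deterministic policies),
and its value `v` satisfies Bellman's optimality inequalities. Recommending `πb` itself gives
`T^{πb} v ≤ v`; together with `v = θ T^d v + (1 - θ) T^{πb} v` and `θ > 0` this forces
`T^{πb} v ≤ T^d v`. Hence `θ' ↦ θ' T^d v + (1 - θ') T^{πb} v` is nondecreasing, `v` is a
subsolution of the Bellman equation at every adherence level `θ' ≥ θ`, and by the comparison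
principle the value of `d` only grows with adherence. So `(d, θ_lo)` is a saddle point, and the
max-min equals the maximum at `θ_lo`. At `θ_lo = 0` the recommendation is irrelevant and `πb` works.
-/

open Finset

section Weights

variable {ι : Type*} [Fintype ι] {w x : ι → ℝ} {c : ℝ}

lemma le_sum_mul_of_mem_stdSimplex (hw : w ∈ stdSimplex ℝ ι) (hx : ∀ i, c ≤ x i) :
    c ≤ ∑ i, w i * x i :=
  calc c = ∑ i, w i * c := by rw [← sum_mul, hw.2, one_mul]
    _ ≤ ∑ i, w i * x i := sum_le_sum fun i _ => mul_le_mul_of_nonneg_left (hx i) (hw.1 i)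

lemma sum_mul_le_of_mem_stdSimplex (hw : w ∈ stdSimplex ℝ ι) (hx : ∀ i, x i ≤ c) :
    ∑ i, w i * x i ≤ c :=
  calc ∑ i, w i * x i ≤ ∑ i, w i * c :=
        sum_le_sum fun i _ => mul_le_mul_of_nonneg_left (hx i) (hw.1 i)
    _ = c := by rw [← sum_mul, hw.2, one_mul]

end Weights

namespace Matrix

variable {n : Type*} [Fintype n] [DecidableEq n] {M : Matrix n n ℝ}

lemma row_mem_stdSimplex_of_mem_rowStochastic (hM : M ∈ rowStochastic ℝ n) (i : n) :
    M i ∈ stdSimplex ℝ n :=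
  ⟨fun _ => nonneg_of_mem_rowStochastic hM, sum_row_of_mem_rowStochastic hM i⟩

lemma le_mulVec_of_mem_rowStochastic (hM : M ∈ rowStochastic ℝ n) {x : n → ℝ} {c : ℝ}
    (hx : ∀ j, c ≤ x j) (i : n) : c ≤ (M *ᵥ x) i :=
  le_sum_mul_of_mem_stdSimplex (row_mem_stdSimplex_of_mem_rowStochastic hM i) hx

lemma abs_mulVec_le_of_mem_rowStochastic (hM : M ∈ rowStochastic ℝ n) {x : n → ℝ} {B : ℝ}
    (hx : ∀ j, |x j| ≤ B) (i : n) : |(M *ᵥ x) i| ≤ B := by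
  have hlo := le_mulVec_of_mem_rowStochastic hM (fun j => (abs_le.1 (hx j)).1) i
  have hhi :=
    le_mulVec_of_mem_rowStochastic hM (x := -x) (fun j => neg_le_neg (abs_le.1 (hx j)).2) i
  rw [mulVec_neg, Pi.neg_apply] at hhi
  exact abs_le.2 ⟨hlo, by linarith⟩

lemma mulVec_mono_of_mem_rowStochastic (hM : M ∈ rowStochastic ℝ n) {x y : n → ℝ}
    (hxy : ∀ j, x j ≤ y j) (i : n) : (M *ᵥ x) i ≤ (M *ᵥ y) i := by
  have := nonneg_mulVec_of_mem_rowStochastic hM (x := y - x) (fun j => sub_nonneg.2 (hxy j)) i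
  rwa [mulVec_sub, Pi.sub_apply, sub_nonneg] at this

end Matrix

section DiscountedValue

variable {n : Type*} [Fintype n] [DecidableEq n] {lam : ℝ} {M : Matrix n n ℝ} {ρ : n → ℝ}

noncomputable def discountedValue (lam : ℝ) (M : Matrix n n ℝ) (ρ : n → ℝ) : n → ℝ :=
  fun s => ∑' t : ℕ, lam ^ t * (M ^ t *ᵥ ρ) s

variable (hl0 : 0 ≤ lam) (hl1 : lam < 1) (hM : M ∈ rowStochastic ℝ n)
include hl0 hl1 hM

lemma summable_discountedValue (s : n) :
    Summable fun t : ℕ => lam ^ t * (M ^ t *ᵥ ρ) s := by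
  refine Summable.of_norm_bounded ((summable_geometric_of_lt_one hl0 hl1).mul_right ‖ρ‖)
    fun t => ?_
  rw [Real.norm_eq_abs, abs_mul, abs_pow, abs_of_nonneg hl0]
  exact mul_le_mul_of_nonneg_left
    (abs_mulVec_le_of_mem_rowStochastic (pow_mem hM t) (fun j => norm_le_pi_norm ρ j) s)
    (pow_nonneg hl0 t)

lemma discountedValue_eq (s : n) :
    discountedValue lam M ρ s = ρ s + lam * (M *ᵥ discountedValue lam M ρ) s := by
  have hs := summable_discountedValue hl0 hl1 hM (ρ := ρ)
  have hshift : ∀ t : ℕ, lam ^ (t + 1) * (M ^ (t + 1) *ᵥ ρ) s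
      = lam * ∑ j, M s j * (lam ^ t * (M ^ t *ᵥ ρ) j) := fun t => by
    rw [pow_succ' M, ← mulVec_mulVec, mulVec, dotProduct, pow_succ, mul_sum, mul_sum]
    exact sum_congr rfl fun j _ => by ring
  calc discountedValue lam M ρ s
      = lam ^ 0 * (M ^ 0 *ᵥ ρ) s + ∑' t : ℕ, lam ^ (t + 1) * (M ^ (t + 1) *ᵥ ρ) s :=
        (hs s).tsum_eq_zero_add
    _ = ρ s + lam * ∑ j, M s j * ∑' t : ℕ, lam ^ t * (M ^ t *ᵥ ρ) j := by
        simp only [pow_zero, one_mul, one_mulVec, hshift, tsum_mul_left]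
        rw [Summable.tsum_finsetSum fun j _ => (hs j).mul_left _]
        simp only [tsum_mul_left]
    _ = ρ s + lam * (M *ᵥ discountedValue lam M ρ) s := rfl

lemma nonneg_of_discount_mulVec_le {u : n → ℝ} (hu : ∀ s, lam * (M *ᵥ u) s ≤ u s) (s : n) :
    0 ≤ u s := by
  have : Nonempty n := ⟨s⟩
  obtain ⟨s₀, hs₀⟩ := Finite.exists_min u
  have hmean : u s₀ ≤ (M *ᵥ u) s₀ := le_mulVec_of_mem_rowStochastic hM hs₀ s₀
  have : 0 ≤ u s₀ := by nlinarith [hu s₀]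
  exact this.trans (hs₀ s)

lemma le_discountedValue {w : n → ℝ} (hw : ∀ s, w s ≤ ρ s + lam * (M *ᵥ w) s) (s : n) :
    w s ≤ discountedValue lam M ρ s := by
  refine sub_nonneg.1
    (nonneg_of_discount_mulVec_le hl0 hl1 hM (u := discountedValue lam M ρ - w) (fun s => ?_) s)
  simp only [mulVec_sub, Pi.sub_apply]
  have := discountedValue_eq hl0 hl1 hM (ρ := ρ) s
  linarith [hw s]

lemma discountedValue_le {w : n → ℝ} (hw : ∀ s, ρ s + lam * (M *ᵥ w) s ≤ w s) (s : n) :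
    discountedValue lam M ρ s ≤ w s := by
  refine sub_nonneg.1
    (nonneg_of_discount_mulVec_le hl0 hl1 hM (u := w - discountedValue lam M ρ) (fun s => ?_) s)
  simp only [mulVec_sub, Pi.sub_apply]
  have := discountedValue_eq hl0 hl1 hM (ρ := ρ) s
  linarith [hw s]

end DiscountedValue

section PolicyEvaluation

variable {S A : Type*} [Fintype S] [Fintype A]
  {lam : ℝ} {P : S → A → S → ℝ} {r : S → A → S → ℝ} {π : S → A → ℝ}

noncomputable def bellman (lam : ℝ) (P : S → A → S → ℝ) (r : S → A → S → ℝ)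
    (π : S → A → ℝ) (w : S → ℝ) (s : S) : ℝ :=
  mdpr P r π s + lam * (mdpM P π *ᵥ w) s

noncomputable def actionValue (lam : ℝ) (P : S → A → S → ℝ) (r : S → A → S → ℝ)
    (a : A) (w : S → ℝ) (s : S) : ℝ :=
  ∑ s', P s a s' * (r s a s' + lam * w s')

lemma bellman_eq_sum_actionValue (w : S → ℝ) (s : S) :
    bellman lam P r π w s = ∑ a, π s a * actionValue lam P r a w s := by
  simp only [bellman, mdpr, mdpM, actionValue, mulVec, dotProduct, mul_add, sum_add_distrib,
    mul_sum, sum_mul]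
  rw [sum_comm (s := univ) (t := univ) (f := fun s' a => lam * (π s a * P s a s' * w s'))]
  congr 1
  all_goals exact sum_congr rfl fun a _ => sum_congr rfl fun s' _ => by ring

variable [DecidableEq S]

noncomputable def policyValue (lam : ℝ) (P : S → A → S → ℝ) (r : S → A → S → ℝ)
    (π : S → A → ℝ) : S → ℝ :=
  discountedValue lam (mdpM P π) (mdpr P r π)

lemma mdpM_mem_rowStochastic (hP : ∀ s a, P s a ∈ stdSimplex ℝ S)
    (hπ : ∀ s, π s ∈ stdSimplex ℝ A) : mdpM P π ∈ rowStochastic ℝ S := by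
  refine mem_rowStochastic_iff_sum.2
    ⟨fun s s' => sum_nonneg fun a _ => mul_nonneg ((hπ s).1 a) ((hP s a).1 s'), fun s => ?_⟩
  simp only [mdpM]
  rw [sum_comm]
  simp only [← mul_sum, (hP _ _).2, mul_one]
  exact (hπ s).2

lemma bellman_mono (hl0 : 0 ≤ lam) (hP : ∀ s a, P s a ∈ stdSimplex ℝ S)
    (hπ : ∀ s, π s ∈ stdSimplex ℝ A) {w w' : S → ℝ} (hww' : ∀ s, w s ≤ w' s) (s : S) :
    bellman lam P r π w s ≤ bellman lam P r π w' s :=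
  add_le_add_right (mul_le_mul_of_nonneg_left
    (mulVec_mono_of_mem_rowStochastic (mdpM_mem_rowStochastic hP hπ) hww' s) hl0) _

section

variable (hl0 : 0 ≤ lam) (hl1 : lam < 1) (hP : ∀ s a, P s a ∈ stdSimplex ℝ S)
  (hπ : ∀ s, π s ∈ stdSimplex ℝ A)
include hl0 hl1 hP hπ

lemma policyValue_eq_bellman (s : S) :
    policyValue lam P r π s = bellman lam P r π (policyValue lam P r π) s :=
  discountedValue_eq hl0 hl1 (mdpM_mem_rowStochastic hP hπ) s

lemma le_policyValue {w : S → ℝ} (hw : ∀ s, w s ≤ bellman lam P r π w s) (s : S) :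
    w s ≤ policyValue lam P r π s :=
  le_discountedValue hl0 hl1 (mdpM_mem_rowStochastic hP hπ) hw s

lemma policyValue_le {w : S → ℝ} (hw : ∀ s, bellman lam P r π w s ≤ w s) (s : S) :
    policyValue lam P r π s ≤ w s :=
  discountedValue_le hl0 hl1 (mdpM_mem_rowStochastic hP hπ) hw s

lemma Ret_eq_sum_policyValue (p0 : S → ℝ) :
    Ret lam P r p0 π = ∑ s, p0 s * policyValue lam P r π s := by
  have hs := summable_discountedValue hl0 hl1 (mdpM_mem_rowStochastic hP hπ) (ρ := mdpr P r π)
  simp only [Ret, policyValue, discountedValue, ← tsum_mul_left]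
  rw [← Summable.tsum_finsetSum fun s _ => (hs s).mul_left _]
  exact tsum_congr fun t => by rw [mul_sum]; exact sum_congr rfl fun s _ => by ring

lemma le_policyValue_of_le_reward {c : ℝ} (hc : ∀ s a s', c ≤ r s a s') (s : S) :
    c / (1 - lam) ≤ policyValue lam P r π s := by
  refine le_policyValue hl0 hl1 hP hπ (w := fun _ => c / (1 - lam)) (fun s => ?_) s
  have hreward : c ≤ mdpr P r π s :=
    le_sum_mul_of_mem_stdSimplex (hπ s) fun a => le_sum_mul_of_mem_stdSimplex (hP s a) (hc s a)
  have hnext : c / (1 - lam) ≤ (mdpM P π *ᵥ fun _ => c / (1 - lam)) s :=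
    le_mulVec_of_mem_rowStochastic (mdpM_mem_rowStochastic hP hπ) (fun _ => le_rfl) s
  have hfix : c / (1 - lam) = c + lam * (c / (1 - lam)) := by
    field_simp [(sub_pos.2 hl1).ne']
    ring
  have := mul_le_mul_of_nonneg_left hnext hl0
  rw [bellman]
  linarith

lemma Ret_mono {p0 : S → ℝ} (hp0 : p0 ∈ stdSimplex ℝ S) {π' : S → A → ℝ}
    (hπ' : ∀ s, π' s ∈ stdSimplex ℝ A)
    (h : ∀ s, policyValue lam P r π s ≤ policyValue lam P r π' s) :
    Ret lam P r p0 π ≤ Ret lam P r p0 π' := by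
  rw [Ret_eq_sum_policyValue hl0 hl1 hP hπ, Ret_eq_sum_policyValue hl0 hl1 hP hπ']
  exact sum_le_sum fun s _ => mul_le_mul_of_nonneg_left (h s) (hp0.1 s)

lemma le_Ret_of_le_reward {p0 : S → ℝ} (hp0 : p0 ∈ stdSimplex ℝ S) {c : ℝ}
    (hc : ∀ s a s', c ≤ r s a s') :
    c / (1 - lam) ≤ Ret lam P r p0 π := by
  rw [Ret_eq_sum_policyValue hl0 hl1 hP hπ]
  exact le_sum_mul_of_mem_stdSimplex hp0 (le_policyValue_of_le_reward hl0 hl1 hP hπ hc)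

end

end PolicyEvaluation

section Adherence

variable {S A : Type*} {lam : ℝ} {P : S → A → S → ℝ} {r : S → A → S → ℝ}
  {π πb : S → A → ℝ} {θ : ℝ}

def effPolicy (θ : ℝ) (π πb : S → A → ℝ) : S → A → ℝ :=
  fun s a => θ * π s a + (1 - θ) * πb s a

lemma effPolicy_zero : effPolicy 0 π πb = πb := by
  funext s a; simp [effPolicy]

lemma effPolicy_self : effPolicy θ πb πb = πb := by
  funext s a; simp only [effPolicy]; ring

open Classical in
noncomputable def detPolicy (d : S → A) : S → A → ℝ :=
  fun s => Pi.single (d s) 1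

variable [Fintype A]

lemma effPolicy_mem_stdSimplex (hθ : θ ∈ Set.Icc (0 : ℝ) 1) (hπ : ∀ s, π s ∈ stdSimplex ℝ A)
    (hπb : ∀ s, πb s ∈ stdSimplex ℝ A) (s : S) : effPolicy θ π πb s ∈ stdSimplex ℝ A :=
  convex_stdSimplex ℝ A (hπ s) (hπb s) hθ.1 (sub_nonneg.2 hθ.2) (add_sub_cancel θ 1)

lemma detPolicy_mem_stdSimplex (d : S → A) (s : S) : detPolicy d s ∈ stdSimplex ℝ A := by
  classical
  exact single_mem_stdSimplex ℝ (d s)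

variable [Fintype S]

noncomputable def adherenceActionValue (lam : ℝ) (P : S → A → S → ℝ) (r : S → A → S → ℝ)
    (θ : ℝ) (πb : S → A → ℝ) (a : A) (w : S → ℝ) (s : S) : ℝ :=
  θ * actionValue lam P r a w s + (1 - θ) * bellman lam P r πb w s

lemma bellman_effPolicy (w : S → ℝ) (s : S) :
    bellman lam P r (effPolicy θ π πb) w s
      = θ * bellman lam P r π w s + (1 - θ) * bellman lam P r πb w s := by
  simp only [bellman_eq_sum_actionValue, effPolicy, add_mul, sum_add_distrib, mul_sum, mul_assoc]

lemma bellman_effPolicy_eq_sum (w : S → ℝ) (s : S) (hπ : π s ∈ stdSimplex ℝ A) :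
    bellman lam P r (effPolicy θ π πb) w s
      = ∑ a, π s a * adherenceActionValue lam P r θ πb a w s := by
  have hbase : (1 - θ) * bellman lam P r πb w s
      = ∑ a, π s a * ((1 - θ) * bellman lam P r πb w s) := by rw [← sum_mul, hπ.2, one_mul]
  rw [bellman_effPolicy, bellman_eq_sum_actionValue (π := π), mul_sum, hbase,
    ← sum_add_distrib]
  exact sum_congr rfl fun a _ => by rw [adherenceActionValue]; ring

lemma bellman_effPolicy_detPolicy (d : S → A) (w : S → ℝ) (s : S) :
    bellman lam P r (effPolicy θ (detPolicy d) πb) w s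
      = adherenceActionValue lam P r θ πb (d s) w s := by
  classical
  rw [bellman_effPolicy_eq_sum w s (detPolicy_mem_stdSimplex d s)]
  simp [detPolicy, Pi.single_apply]

end Adherence

section Optimality

variable {S A : Type*} [Fintype S] [Fintype A] [DecidableEq S]
  {lam : ℝ} {P : S → A → S → ℝ} {r : S → A → S → ℝ} {π πb : S → A → ℝ} {θ : ℝ}

variable (hl0 : 0 ≤ lam) (hl1 : lam < 1) (hP : ∀ s a, P s a ∈ stdSimplex ℝ S)
  (hπb : ∀ s, πb s ∈ stdSimplex ℝ A)
include hl0 hl1 hP hπb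

lemma policyValue_effPolicy_le (hθ : θ ∈ Set.Icc (0 : ℝ) 1) (hπ : ∀ s, π s ∈ stdSimplex ℝ A)
    {w : S → ℝ} (hw : ∀ s a, adherenceActionValue lam P r θ πb a w s ≤ w s) (s : S) :
    policyValue lam P r (effPolicy θ π πb) s ≤ w s := by
  refine policyValue_le hl0 hl1 hP (effPolicy_mem_stdSimplex hθ hπ hπb) (fun s => ?_) s
  rw [bellman_effPolicy_eq_sum w s (hπ s)]
  exact sum_mul_le_of_mem_stdSimplex (hπ s) (hw s)

lemma exists_detPolicy_forall_adherenceActionValue_le [Nonempty A]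
    (hθ : θ ∈ Set.Icc (0 : ℝ) 1) :
    ∃ d : S → A, ∀ s a,
      adherenceActionValue lam P r θ πb a (policyValue lam P r (effPolicy θ (detPolicy d) πb)) s
        ≤ policyValue lam P r (effPolicy θ (detPolicy d) πb) s := by
  classical
  have hmem : ∀ d : S → A, ∀ s, effPolicy θ (detPolicy d) πb s ∈ stdSimplex ℝ A :=
    fun d => effPolicy_mem_stdSimplex hθ (detPolicy_mem_stdSimplex d) hπb
  obtain ⟨d, -, hd⟩ := exists_max_image univ
    (fun d : S → A => ∑ s, policyValue lam P r (effPolicy θ (detPolicy d) πb) s) univ_nonempty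
  refine ⟨d, fun s₀ a₀ => le_of_not_gt fun hgt => ?_⟩
  set d' := Function.update d s₀ a₀ with hd'
  set w := policyValue lam P r (effPolicy θ (detPolicy d) πb)
  set w' := policyValue lam P r (effPolicy θ (detPolicy d') πb)
  have hsub : ∀ s, w s ≤ bellman lam P r (effPolicy θ (detPolicy d') πb) w s := by
    intro s
    rw [bellman_effPolicy_detPolicy]
    rcases eq_or_ne s s₀ with rfl | hs
    · rw [hd', Function.update_self]
      exact hgt.le
    · rw [hd', Function.update_of_ne hs, ← bellman_effPolicy_detPolicy]
      exact (policyValue_eq_bellman hl0 hl1 hP (hmem d) s).le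
  have hle : ∀ s, w s ≤ w' s := le_policyValue hl0 hl1 hP (hmem d') hsub
  have hlt : w s₀ < w' s₀ :=
    calc w s₀ < adherenceActionValue lam P r θ πb a₀ w s₀ := hgt
      _ = bellman lam P r (effPolicy θ (detPolicy d') πb) w s₀ := by
        rw [bellman_effPolicy_detPolicy, hd', Function.update_self]
      _ ≤ bellman lam P r (effPolicy θ (detPolicy d') πb) w' s₀ :=
        bellman_mono hl0 hP (hmem d') hle s₀
      _ = w' s₀ := (policyValue_eq_bellman hl0 hl1 hP (hmem d') s₀).symm
  exact (hd d' (mem_univ _)).not_gt (sum_lt_sum (fun s _ => hle s) ⟨s₀, mem_univ _, hlt⟩)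

lemma policyValue_effPolicy_mono (hθ : 0 < θ) {θ' : ℝ} (hθθ' : θ ≤ θ') (hθ' : θ' ≤ 1)
    (hπ : ∀ s, π s ∈ stdSimplex ℝ A)
    (hopt : ∀ s a, adherenceActionValue lam P r θ πb a (policyValue lam P r (effPolicy θ π πb)) s
      ≤ policyValue lam P r (effPolicy θ π πb) s) (s : S) :
    policyValue lam P r (effPolicy θ π πb) s ≤ policyValue lam P r (effPolicy θ' π πb) s := by
  set w := policyValue lam P r (effPolicy θ π πb)
  have hmem := effPolicy_mem_stdSimplex ⟨hθ.le, hθθ'.trans hθ'⟩ hπ hπb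
  refine le_policyValue hl0 hl1 hP
    (effPolicy_mem_stdSimplex ⟨hθ.le.trans hθθ', hθ'⟩ hπ hπb) (fun s => ?_) s
  have hbase : bellman lam P r πb w s ≤ w s :=
    calc bellman lam P r πb w s = bellman lam P r (effPolicy θ πb πb) w s := by
          rw [effPolicy_self]
      _ = ∑ a, πb s a * adherenceActionValue lam P r θ πb a w s :=
          bellman_effPolicy_eq_sum w s (hπb s)
      _ ≤ w s := sum_mul_le_of_mem_stdSimplex (hπb s) (hopt s)
  have hfix : w s = θ * bellman lam P r π w s + (1 - θ) * bellman lam P r πb w s := by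
    rw [← bellman_effPolicy]
    exact policyValue_eq_bellman hl0 hl1 hP hmem s
  have hgain : bellman lam P r πb w s ≤ bellman lam P r π w s :=
    sub_nonneg.1 (nonneg_of_mul_nonneg_right (by linarith) hθ)
  rw [bellman_effPolicy]
  nlinarith [mul_nonneg (sub_nonneg.2 hθθ') (sub_nonneg.2 hgain)]

end Optimality

lemma sSup_sInf_eq_sSup_of_isSaddle {X Θ : Type*} {p : X → Prop} {I : Set Θ} {f : X → Θ → ℝ}
    {x₀ : X} {θ₀ : Θ} {c : ℝ} (hx₀ : p x₀) (hθ₀ : θ₀ ∈ I) (hc : ∀ x, p x → ∀ θ ∈ I, c ≤ f x θ)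
    (hmax : ∀ x, p x → f x θ₀ ≤ f x₀ θ₀) (hmin : ∀ θ ∈ I, f x₀ θ₀ ≤ f x₀ θ) :
    sSup {v | ∃ x, p x ∧ v = sInf {y | ∃ θ ∈ I, y = f x θ}} = sSup {v | ∃ x, p x ∧ v = f x θ₀} := by
  have hinf_le : ∀ x, p x → sInf {y | ∃ θ ∈ I, y = f x θ} ≤ f x θ₀ := fun x hx =>
    csInf_le ⟨c, by rintro _ ⟨θ, hθ, rfl⟩; exact hc x hx θ hθ⟩ ⟨θ₀, hθ₀, rfl⟩
  have hinf₀ : IsLeast {y | ∃ θ ∈ I, y = f x₀ θ} (f x₀ θ₀) :=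
    ⟨⟨θ₀, hθ₀, rfl⟩, by rintro _ ⟨θ, hθ, rfl⟩; exact hmin θ hθ⟩
  have hlhs : IsGreatest {v | ∃ x, p x ∧ v = sInf {y | ∃ θ ∈ I, y = f x θ}} (f x₀ θ₀) :=
    ⟨⟨x₀, hx₀, hinf₀.csInf_eq.symm⟩,
      by rintro _ ⟨x, hx, rfl⟩; exact (hinf_le x hx).trans (hmax x hx)⟩
  have hrhs : IsGreatest {v | ∃ x, p x ∧ v = f x θ₀} (f x₀ θ₀) :=
    ⟨⟨x₀, hx₀, rfl⟩, by rintro _ ⟨x, hx, rfl⟩; exact hmax x hx⟩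
  rw [hlhs.csSup_eq, hrhs.csSup_eq]

theorem exists_optimal_effPolicy_isSaddle {S A : Type*} [Fintype S] [Fintype A] [DecidableEq S]
    [Nonempty A] {lam : ℝ} (hl0 : 0 ≤ lam) (hl1 : lam < 1) {P : S → A → S → ℝ}
    (hP : ∀ s a, P s a ∈ stdSimplex ℝ S) {r : S → A → S → ℝ} {p0 : S → ℝ}
    (hp0 : p0 ∈ stdSimplex ℝ S) {πb : S → A → ℝ} (hπb : ∀ s, πb s ∈ stdSimplex ℝ A)
    {θ : ℝ} (hθ : θ ∈ Set.Icc (0 : ℝ) 1) :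
    ∃ πstar : S → A → ℝ, (∀ s, πstar s ∈ stdSimplex ℝ A) ∧
      (∀ π : S → A → ℝ, (∀ s, π s ∈ stdSimplex ℝ A) →
        Ret lam P r p0 (effPolicy θ π πb) ≤ Ret lam P r p0 (effPolicy θ πstar πb)) ∧
      ∀ θ' ∈ Set.Icc θ 1,
        Ret lam P r p0 (effPolicy θ πstar πb) ≤ Ret lam P r p0 (effPolicy θ' πstar πb) := by
  rcases hθ.1.eq_or_lt with rfl | hθ0
  · refine ⟨πb, hπb, fun π _ => by rw [effPolicy_zero, effPolicy_zero], fun θ' _ => ?_⟩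
    rw [effPolicy_zero, effPolicy_self]
  obtain ⟨d, hd⟩ := exists_detPolicy_forall_adherenceActionValue_le hl0 hl1 hP hπb hθ
  have hmem : ∀ θ' ∈ Set.Icc (0 : ℝ) 1, ∀ π : S → A → ℝ, (∀ s, π s ∈ stdSimplex ℝ A) →
      ∀ s, effPolicy θ' π πb s ∈ stdSimplex ℝ A :=
    fun θ' hθ' π hπ => effPolicy_mem_stdSimplex hθ' hπ hπb
  refine ⟨detPolicy d, detPolicy_mem_stdSimplex d, fun π hπ => ?_, fun θ' hθ' => ?_⟩
  · exact Ret_mono hl0 hl1 hP (hmem θ hθ π hπ) hp0 (hmem θ hθ _ (detPolicy_mem_stdSimplex d))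
      (policyValue_effPolicy_le hl0 hl1 hP hπb hθ hπ hd)
  · exact Ret_mono hl0 hl1 hP (hmem θ hθ _ (detPolicy_mem_stdSimplex d)) hp0
      (hmem θ' ⟨hθ.1.trans hθ'.1, hθ'.2⟩ _ (detPolicy_mem_stdSimplex d))
      (policyValue_effPolicy_mono hl0 hl1 hP hπb hθ0 hθ'.1 hθ'.2 (detPolicy_mem_stdSimplex d) hd)

theorem stmt17_general {S A : Type*} [Fintype S] [Fintype A] [Nonempty A]
    [DecidableEq S]
    (lam : ℝ) (hlam : lam ∈ Set.Ico (0:ℝ) 1)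
    (P : S → A → S → ℝ) (hP : ∀ s a, P s a ∈ stdSimplex ℝ S)
    (r : S → A → S → ℝ)
    (p0 : S → ℝ) (hp0 : p0 ∈ stdSimplex ℝ S)
    (πb : S → A → ℝ) (hπb : ∀ s, πb s ∈ stdSimplex ℝ A)
    (θlo θhi : ℝ) (hθlo : θlo ∈ Set.Icc (0:ℝ) 1) (hθhi : θhi ∈ Set.Icc (0:ℝ) 1)
    (hle : θlo ≤ θhi) :
    (sSup {x : ℝ | ∃ π : S → A → ℝ, (∀ s, π s ∈ stdSimplex ℝ A) ∧
        x = sInf {y : ℝ | ∃ θ' ∈ Set.Icc θlo θhi,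
          y = Ret lam P r p0 (fun s a => θ' * π s a + (1 - θ') * πb s a)}}
      = sSup {x : ℝ | ∃ π : S → A → ℝ, (∀ s, π s ∈ stdSimplex ℝ A) ∧
        x = Ret lam P r p0 (fun s a => θlo * π s a + (1 - θlo) * πb s a)}) ∧
    ∃ πstar : S → A → ℝ, (∀ s, πstar s ∈ stdSimplex ℝ A) ∧
      -- `πstar` is an optimal recommendation at adherence level `θlo` …
      (∀ π : S → A → ℝ, (∀ s, π s ∈ stdSimplex ℝ A) →
        Ret lam P r p0 (fun s a => θlo * π s a + (1 - θlo) * πb s a)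
          ≤ Ret lam P r p0 (fun s a => θlo * πstar s a + (1 - θlo) * πb s a)) ∧
      -- … and `(πstar, θlo)` is a saddle point of the robust problem.
      (∀ θ' ∈ Set.Icc θlo θhi,
        Ret lam P r p0 (fun s a => θlo * πstar s a + (1 - θlo) * πb s a)
          ≤ Ret lam P r p0 (fun s a => θ' * πstar s a + (1 - θ') * πb s a)) := by
  obtain ⟨hl0, hl1⟩ := hlam
  obtain ⟨c, hc⟩ := Finite.bddBelow_range fun x : S × A × S => r x.1 x.2.1 x.2.2
  obtain ⟨πstar, hπstar, hopt, hsaddle⟩ :=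
    exists_optimal_effPolicy_isSaddle (r := r) hl0 hl1 hP hp0 hπb hθlo
  have hsaddle' : ∀ θ' ∈ Set.Icc θlo θhi, Ret lam P r p0 (effPolicy θlo πstar πb)
      ≤ Ret lam P r p0 (effPolicy θ' πstar πb) :=
    fun θ' hθ' => hsaddle θ' ⟨hθ'.1, hθ'.2.trans hθhi.2⟩
  refine ⟨sSup_sInf_eq_sSup_of_isSaddle (f := fun π θ => Ret lam P r p0 (effPolicy θ π πb))
    (c := c / (1 - lam)) hπstar ⟨le_rfl, hle⟩ (fun π hπ θ hθ => ?_) hopt hsaddle',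
    πstar, hπstar, hopt, hsaddle'⟩
  exact le_Ret_of_le_reward hl0 hl1 hP
    (effPolicy_mem_stdSimplex ⟨hθlo.1.trans hθ.1, hθ.2.trans hθhi.2⟩ hπ hπb) hp0
    fun s a s' => hc ⟨(s, a, s'), rfl⟩

/-- Robust adherence-aware MDP with uncertain adherence level in `[θ_lo, θ_hi]`:
the worst case is always attained at the lowest adherence level `θ_lo`, and an
optimal recommendation at `θ_lo`, together with `θ_lo`, forms a saddle point. -/
theorem stmt17 {S A : Type*} [Fintype S] [Fintype A] [Nonempty S] [Nonempty A]
    [DecidableEq S]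
    (lam : ℝ) (hlam : lam ∈ Set.Ico (0:ℝ) 1)
    (P : S → A → S → ℝ) (hP : ∀ s a, P s a ∈ stdSimplex ℝ S)
    (r : S → A → S → ℝ)
    (p0 : S → ℝ) (hp0 : p0 ∈ stdSimplex ℝ S)
    (πb : S → A → ℝ) (hπb : ∀ s, πb s ∈ stdSimplex ℝ A)
    (θlo θhi : ℝ) (hθlo : θlo ∈ Set.Icc (0:ℝ) 1) (hθhi : θhi ∈ Set.Icc (0:ℝ) 1)
    (hle : θlo ≤ θhi) :
    (sSup {x : ℝ | ∃ π : S → A → ℝ, (∀ s, π s ∈ stdSimplex ℝ A) ∧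
        x = sInf {y : ℝ | ∃ θ' ∈ Set.Icc θlo θhi,
          y = Ret lam P r p0 (fun s a => θ' * π s a + (1 - θ') * πb s a)}}
      = sSup {x : ℝ | ∃ π : S → A → ℝ, (∀ s, π s ∈ stdSimplex ℝ A) ∧
        x = Ret lam P r p0 (fun s a => θlo * π s a + (1 - θlo) * πb s a)}) ∧
    ∃ πstar : S → A → ℝ, (∀ s, πstar s ∈ stdSimplex ℝ A) ∧
      -- `πstar` is an optimal recommendation at adherence level `θlo` …
      (∀ π : S → A → ℝ, (∀ s, π s ∈ stdSimplex ℝ A) →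
        Ret lam P r p0 (fun s a => θlo * π s a + (1 - θlo) * πb s a)
          ≤ Ret lam P r p0 (fun s a => θlo * πstar s a + (1 - θlo) * πb s a)) ∧
      -- … and `(πstar, θlo)` is a saddle point of the robust problem.
      (∀ θ' ∈ Set.Icc θlo θhi,
        Ret lam P r p0 (fun s a => θlo * πstar s a + (1 - θlo) * πb s a)
          ≤ Ret lam P r p0 (fun s a => θ' * πstar s a + (1 - θ') * πb s a)) :=
  stmt17_general lam hlam P hP r p0 hp0 πb hπb θlo θhi hθlo hθhi hle
end

section
/- If the baseline policy π_base is an optimal recommendation at some adherence level θ₀ ∈ [0,1] — i.e., R(π_eff(π_base, θ₀)) ≥ R(π_eff(π, θ₀)) for all stationary policies π — then π_base is an optimal recommendation at every θ ∈ [0, θ₀]. -/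
open scoped BigOperators
open Matrix

/-!
Mixing with the baseline is the same at every adherence level up to reparametrisation: for
`0 ≤ θ ≤ θ₀`, `θ π + (1 - θ) π_b = θ₀ σ + (1 - θ₀) π_b` with `σ = (θ/θ₀) π + (1 - θ/θ₀) π_b`,
which is again a stationary policy by convexity. So every effective policy reachable at level `θ`
is already reachable at level `θ₀`, where none beats `π_b` itself, and mixing `π_b` with itself
gives back `π_b` at every level.
-/

section Mixing

variable {E : Type*} [AddCommGroup E] [Module ℝ E] {s : Set E} {b x : E} {θ θ₀ : ℝ}

theorem Convex.exists_mix_eq_mix_of_le (hs : Convex ℝ s) (hb : b ∈ s) (hx : x ∈ s)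
    (hθ : 0 ≤ θ) (hθθ₀ : θ ≤ θ₀) :
    ∃ y ∈ s, θ • x + (1 - θ) • b = θ₀ • y + (1 - θ₀) • b := by
  have hθ₀ : 0 ≤ θ₀ := hθ.trans hθθ₀
  -- when `θ₀ = 0` also `θ = 0`, and the junk value `θ / 0 = 0` still gives the right identity
  have hscale : θ₀ * (θ / θ₀) = θ := by
    rcases hθ₀.eq_or_lt with h | h
    · simp [← h, le_antisymm (h ▸ hθθ₀) hθ]
    · exact mul_div_cancel₀ θ h.ne'
  refine ⟨(θ / θ₀) • x + (1 - θ / θ₀) • b,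
    hs hx hb (div_nonneg hθ hθ₀) (sub_nonneg.2 (div_le_one_of_le₀ hθθ₀ hθ₀)) (by ring), ?_⟩
  linear_combination (norm := module) hscale • (b - x)

theorem Convex.mix_le_of_forall_mix_le {β : Type*} [Preorder β] (f : E → β)
    (hs : Convex ℝ s) (hb : b ∈ s) (hθ : 0 ≤ θ) (hθθ₀ : θ ≤ θ₀)
    (hopt : ∀ y ∈ s, f (θ₀ • y + (1 - θ₀) • b) ≤ f b) (hx : x ∈ s) :
    f (θ • x + (1 - θ) • b) ≤ f b := by
  obtain ⟨y, hy, hxy⟩ := hs.exists_mix_eq_mix_of_le hb hx hθ hθθ₀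
  exact hxy ▸ hopt y hy

end Mixing

theorem convex_stochasticPolicies (S A : Type*) [Fintype A] :
    Convex ℝ {π : S → A → ℝ | ∀ s, π s ∈ stdSimplex ℝ A} := by
  intro π hπ σ hσ a b ha hb hab s
  exact convex_stdSimplex ℝ A (hπ s) (hσ s) ha hb hab

theorem stmt18_general {S A : Type*} [Fintype S] [Fintype A]
    [DecidableEq S]
    (lam : ℝ)
    (P : S → A → S → ℝ)
    (r : S → A → S → ℝ)
    (p0 : S → ℝ)
    (πb : S → A → ℝ) (hπb : ∀ s, πb s ∈ stdSimplex ℝ A)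
    (θ₀ : ℝ)
    (hopt : ∀ π : S → A → ℝ, (∀ s, π s ∈ stdSimplex ℝ A) →
      Ret lam P r p0 (fun s a => θ₀ * π s a + (1 - θ₀) * πb s a)
        ≤ Ret lam P r p0 (fun s a => θ₀ * πb s a + (1 - θ₀) * πb s a)) :
    ∀ θ ∈ Set.Icc (0:ℝ) θ₀, ∀ π : S → A → ℝ, (∀ s, π s ∈ stdSimplex ℝ A) →
      Ret lam P r p0 (fun s a => θ * π s a + (1 - θ) * πb s a)
        ≤ Ret lam P r p0 (fun s a => θ * πb s a + (1 - θ) * πb s a) := by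
  intro θ ⟨hθ, hθθ₀⟩ π hπ
  have hself : ∀ t : ℝ, t • πb + (1 - t) • πb = πb := fun t => Convex.combo_self (by ring) πb
  change Ret lam P r p0 (θ • π + (1 - θ) • πb) ≤ Ret lam P r p0 (θ • πb + (1 - θ) • πb)
  rw [hself]
  refine (convex_stochasticPolicies S A).mix_le_of_forall_mix_le (Ret lam P r p0) hπb hθ hθθ₀
    (fun σ hσ => (hopt σ hσ).trans_eq (congrArg (Ret lam P r p0) (hself θ₀))) hπ

/-- If the baseline policy is an optimal recommendation at adherence level `θ₀`, then
it is an optimal recommendation at every adherence level `θ ∈ [0, θ₀]`. -/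
theorem stmt18 {S A : Type*} [Fintype S] [Fintype A] [Nonempty S] [Nonempty A]
    [DecidableEq S]
    (lam : ℝ) (hlam : lam ∈ Set.Ico (0:ℝ) 1)
    (P : S → A → S → ℝ) (hP : ∀ s a, P s a ∈ stdSimplex ℝ S)
    (r : S → A → S → ℝ)
    (p0 : S → ℝ) (hp0 : p0 ∈ stdSimplex ℝ S)
    (πb : S → A → ℝ) (hπb : ∀ s, πb s ∈ stdSimplex ℝ A)
    (θ₀ : ℝ) (hθ₀ : θ₀ ∈ Set.Icc (0:ℝ) 1)
    (hopt : ∀ π : S → A → ℝ, (∀ s, π s ∈ stdSimplex ℝ A) →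
      Ret lam P r p0 (fun s a => θ₀ * π s a + (1 - θ₀) * πb s a)
        ≤ Ret lam P r p0 (fun s a => θ₀ * πb s a + (1 - θ₀) * πb s a)) :
    ∀ θ ∈ Set.Icc (0:ℝ) θ₀, ∀ π : S → A → ℝ, (∀ s, π s ∈ stdSimplex ℝ A) →
      Ret lam P r p0 (fun s a => θ * π s a + (1 - θ) * πb s a)
        ≤ Ret lam P r p0 (fun s a => θ * πb s a + (1 - θ) * πb s a) :=
  stmt18_general lam P r p0 πb hπb θ₀ hopt
end
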